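/- A twisted-circulant matrix A(a), for a = (a_0, …, a_{n−1}) ∈ W^n, is invertible in the n×n matrix ring over W if and only if a_0 is a unit of W; moreover, when a_0 ∈ W^×, the inverse matrix is again of twisted-circulant form, i.e. A(a)^{-1} = A(b) for some b ∈ W^n. -/

import Mathlib

/-- The Frobenius automorphism `σ` of `W = W(K)`, induced by functoriality of Witt vectors
from the Frobenius automorphism `x ↦ x^p` of the finite field `K`. -/
noncomputable def wittFrob (p : ℕ) [Fact p.Prime]
    (K : Type) [Field K] [Fintype K] [CharP K p] : RingAut (WittVector p K) :=
  RingEquiv.ofRingHom (WittVector.map ((frobeniusEquiv K p : K ≃+* K) : K →+* K))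
    (WittVector.map (((frobeniusEquiv K p).symm : K ≃+* K) : K →+* K))
    (by
      apply RingHom.ext
      intro x
      apply WittVector.ext
      intro k
      simp [WittVector.map_coeff])
    (by
      apply RingHom.ext
      intro x
      apply WittVector.ext
      intro k
      simp [WittVector.map_coeff])

/-- The "twisted-circulant" matrix `A(a)` of a tuple `a = (a_0, …, a_{n−1}) ∈ Wⁿ`:
`A(a)_{ij} = σ^{−i}(a_{i−j})` for `i ≥ j` and `A(a)_{ij} = p·σ^{−i}(a_{n+i−j})` for `i < j`
(the index `i − j` resp. `n + i − j` is subtraction modulo `n`, i.e. subtraction in `Fin n`). -/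
noncomputable def twc (p : ℕ) [Fact p.Prime]
    (K : Type) [Field K] [Fintype K] [CharP K p] (n : ℕ)
    (a : Fin n → WittVector p K) : Matrix (Fin n) (Fin n) (WittVector p K) :=
  Matrix.of fun i j =>
    if (j : ℕ) ≤ (i : ℕ) then ((wittFrob p K)⁻¹ ^ (i : ℕ)) (a (i - j))
    else (p : WittVector p K) * (((wittFrob p K)⁻¹ ^ (i : ℕ)) (a (i - j)))

/-!
Let `Π` be the cyclic shift matrix with `p` in the corner: entries `1` at `(j + 1, j)` and `p` at
`(0, n - 1)`. Since `σⁿ = 1` and `σ(p) = p`, a matrix `M` over `W` is twisted-circulant exactly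
when `Π σ⁻¹(M) = M Π`, and then its first column determines it. This relation passes to inverses,
so the inverse of an invertible `A(a)` is again twisted-circulant. Modulo `p`, `A(a)` is lower
triangular with diagonal entries `σ⁻ⁱ(a₀)`, so `det A(a)` is a unit of the local ring `W` exactly
when `a₀` is.
-/

open Matrix

lemma pow_val_sub_one_add_one {G : Type*} [Monoid G] {g : G} {n : ℕ} [NeZero n] (hg : g ^ n = 1)
    (i : Fin n) : g ^ ((i - 1 : Fin n) + 1 : ℕ) = g ^ (i : ℕ) := by
  rw [pow_eq_pow_mod _ hg]
  congr 1
  conv_rhs => rw [← sub_add_cancel i 1]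
  rw [Fin.val_add, Fin.val_one', Nat.add_mod_mod]

section TwistedCirculant

variable {R : Type*} [CommRing R] {n : ℕ}

noncomputable def twistedCirculant (π : R) (τ : RingAut R) (n : ℕ) (a : Fin n → R) :
    Matrix (Fin n) (Fin n) R :=
  Matrix.of fun i j =>
    if (j : ℕ) ≤ (i : ℕ) then (τ ^ (i : ℕ)) (a (i - j))
    else π * (τ ^ (i : ℕ)) (a (i - j))

variable {π : R} {τ : RingAut R}

lemma twistedCirculant_apply (a : Fin n → R) (i j : Fin n) :
    twistedCirculant π τ n a i j = (if j ≤ i then 1 else π) * (τ ^ (i : ℕ)) (a (i - j)) := by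
  simp only [twistedCirculant, of_apply, Fin.le_iff_val_le_val]
  split_ifs <;> simp

def twistedShift (π : R) (n : ℕ) [NeZero n] : Matrix (Fin n) (Fin n) R :=
  Matrix.of fun i j => if i = j + 1 then (if i = 0 then π else 1) else 0

variable [NeZero n]

lemma twistedShift_mul_apply (M : Matrix (Fin n) (Fin n) R) (i j : Fin n) :
    (twistedShift π n * M) i j = (if i = 0 then π else 1) * M (i - 1) j := by
  simp only [twistedShift, mul_apply, of_apply, ite_mul, zero_mul, ← sub_eq_iff_eq_add]
  simp

lemma mul_twistedShift_apply (M : Matrix (Fin n) (Fin n) R) (i j : Fin n) :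
    (M * twistedShift π n) i j = M i (j + 1) * (if j + 1 = 0 then π else 1) := by
  simp [twistedShift, mul_apply]

lemma twistedShift_weight_comm (i j : Fin n) :
    (if i = 0 then π else 1) * (if j ≤ i - 1 then 1 else π)
      = (if j + 1 ≤ i then 1 else π) * (if j + 1 = 0 then π else 1) := by
  obtain ⟨m, rfl⟩ : ∃ m, n = m + 1 := Nat.exists_eq_add_one.mpr (Nat.pos_of_neZero n)
  simp only [Fin.le_iff_val_le_val, Fin.coe_sub_one, Fin.val_add_one, Fin.ext_iff,
    Fin.val_zero, Fin.val_last]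
  split_ifs <;> first | (exfalso; omega) | ring

lemma semiconjBy_twistedShift_twistedCirculant (hπ : τ π = π) (hτ : τ ^ n = 1)
    (a : Fin n → R) :
    SemiconjBy (twistedShift π n) ((twistedCirculant π τ n a).map τ)
      (twistedCirculant π τ n a) := by
  ext i j
  rw [twistedShift_mul_apply, mul_twistedShift_apply, map_apply, twistedCirculant_apply,
    twistedCirculant_apply, map_mul, apply_ite τ, map_one, hπ, ← RingAut.mul_apply, ← pow_succ',
    pow_val_sub_one_add_one hτ, sub_sub, add_comm 1 j, ← mul_assoc, twistedShift_weight_comm]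
  ring

lemma apply_add_one_of_semiconjBy {M : Matrix (Fin n) (Fin n) R}
    (h : SemiconjBy (twistedShift π n) (M.map τ) M) (i : Fin n) {j : Fin n} (hj : j + 1 ≠ 0) :
    M i (j + 1) = (if i = 0 then π else 1) * τ (M (i - 1) j) := by
  have := congr_fun₂ h i j
  rwa [twistedShift_mul_apply, mul_twistedShift_apply, if_neg hj, mul_one, map_apply,
    eq_comm] at this

lemma eq_of_semiconjBy_twistedShift {M N : Matrix (Fin n) (Fin n) R}
    (hM : SemiconjBy (twistedShift π n) (M.map τ) M)
    (hN : SemiconjBy (twistedShift π n) (N.map τ) N) (h₀ : ∀ i, M i 0 = N i 0) : M = N := by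
  obtain ⟨m, rfl⟩ : ∃ m, n = m + 1 := Nat.exists_eq_add_one.mpr (Nat.pos_of_neZero n)
  ext i j
  induction j using Fin.induction generalizing i with
  | zero => exact h₀ i
  | succ j ih =>
    rw [← Fin.coeSucc_eq_succ, apply_add_one_of_semiconjBy hM i, apply_add_one_of_semiconjBy hN i,
      ih]
    all_goals rw [Fin.coeSucc_eq_succ]; exact Fin.succ_ne_zero j

lemma eq_twistedCirculant_of_semiconjBy (hπ : τ π = π) (hτ : τ ^ n = 1)
    {M : Matrix (Fin n) (Fin n) R} (h : SemiconjBy (twistedShift π n) (M.map τ) M) :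
    M = twistedCirculant π τ n fun k => (τ ^ (k : ℕ))⁻¹ (M k 0) := by
  refine eq_of_semiconjBy_twistedShift h (semiconjBy_twistedShift_twistedCirculant hπ hτ _) ?_
  intro i
  simp [twistedCirculant_apply, RingAut.inv_apply]

lemma exists_twistedCirculant_inverse (hπ : τ π = π) (hτ : τ ^ n = 1) (a : Fin n → R)
    (ha : IsUnit (twistedCirculant π τ n a)) :
    ∃ b, twistedCirculant π τ n a * twistedCirculant π τ n b = 1 ∧
      twistedCirculant π τ n b * twistedCirculant π τ n a = 1 := by
  obtain ⟨u, hu⟩ := ha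
  have h := semiconjBy_twistedShift_twistedCirculant hπ hτ a
  rw [← hu] at h
  have hinv : SemiconjBy (twistedShift π n) ((↑u⁻¹ : Matrix (Fin n) (Fin n) R).map τ) ↑u⁻¹ :=
    SemiconjBy.units_inv_right (x := Units.map (τ.mapMatrix (m := Fin n)).toMonoidHom u) h
  refine ⟨fun k => (τ ^ (k : ℕ))⁻¹ ((↑u⁻¹ : Matrix (Fin n) (Fin n) R) k 0), ?_, ?_⟩ <;>
    rw [← eq_twistedCirculant_of_semiconjBy hπ hτ hinv, ← hu]
  exacts [u.mul_inv, u.inv_mul]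

lemma det_map_twistedCirculant {S : Type*} [CommRing S] (f : R →+* S) (hf : f π = 0)
    (a : Fin n → R) :
    ((twistedCirculant π τ n a).map f).det = ∏ i : Fin n, f ((τ ^ (i : ℕ)) (a 0)) := by
  rw [det_of_isLowerTriangular]
  · simp [twistedCirculant_apply]
  · intro i j hij
    simp [twistedCirculant_apply, not_le.mpr (show i < j from hij), hf]

lemma isUnit_det_twistedCirculant_iff [IsLocalRing R] (hπ : π ∈ IsLocalRing.maximalIdeal R)
    (a : Fin n → R) : IsUnit (twistedCirculant π τ n a).det ↔ IsUnit (a 0) := by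
  rw [← IsLocalRing.residue_ne_zero_iff_isUnit, RingHom.map_det, RingHom.mapMatrix_apply,
    det_map_twistedCirculant _ ((IsLocalRing.residue_eq_zero_iff π).mpr hπ),
    Finset.prod_ne_zero_iff]
  simp only [Finset.mem_univ, IsLocalRing.residue_ne_zero_iff_isUnit,
    isUnit_map_iff, forall_const]

end TwistedCirculant

section WittVector

variable (p : ℕ) [Fact p.Prime] {K : Type} [Field K] [Fintype K] [CharP K p]

lemma wittFrob_pow_coeff (m : ℕ) (x : WittVector p K) (k : ℕ) :
    ((wittFrob p K ^ m) x).coeff k = x.coeff k ^ p ^ m := by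
  induction m with
  | zero => simp
  | succ m ih =>
    rw [pow_succ', RingAut.mul_apply, pow_succ, pow_mul, ← ih]
    exact WittVector.map_coeff _ _ _

lemma wittFrob_pow_eq_one {n : ℕ} (hK : Fintype.card K = p ^ n) : wittFrob p K ^ n = 1 := by
  ext x k
  rw [wittFrob_pow_coeff, ← hK, FiniteField.pow_card, RingAut.one_apply]

lemma twc_eq_twistedCirculant (n : ℕ) (a : Fin n → WittVector p K) :
    twc p K n a = twistedCirculant (p : WittVector p K) (wittFrob p K)⁻¹ n a :=
  rfl

lemma natCast_mem_maximalIdeal_wittVector :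
    (p : WittVector p K) ∈ IsLocalRing.maximalIdeal (WittVector p K) :=
  (WittVector.irreducible p).not_isUnit

end WittVector

/-- A twisted-circulant matrix `A(a)` is invertible in the `n×n` matrix ring
over `W` if and only if `a₀` is a unit of `W`; moreover, when `a₀ ∈ W^×`, the inverse matrix
is again of twisted-circulant form: `A(a)⁻¹ = A(b)` for some `b ∈ Wⁿ`. -/
theorem twc_isUnit_iff_and_inverse_twc
    (p n : ℕ) [Fact p.Prime] (hn : 1 ≤ n)
    (K : Type) [Field K] [Fintype K] [CharP K p] (hK : Fintype.card K = p ^ n)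
    (a : Fin n → WittVector p K) :
    (IsUnit (twc p K n a) ↔ IsUnit (a ⟨0, hn⟩)) ∧
    (IsUnit (a ⟨0, hn⟩) → ∃ b : Fin n → WittVector p K,
      twc p K n a * twc p K n b = 1 ∧ twc p K n b * twc p K n a = 1) := by
  have : NeZero n := ⟨by omega⟩
  have hπ : (wittFrob p K)⁻¹ (p : WittVector p K) = p := map_natCast _ p
  have hτ : (wittFrob p K)⁻¹ ^ n = 1 := by rw [inv_pow, wittFrob_pow_eq_one p hK, inv_one]
  simp only [twc_eq_twistedCirculant]
  have hunit : IsUnit (twistedCirculant (p : WittVector p K) (wittFrob p K)⁻¹ n a) ↔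
      IsUnit (a 0) :=
    (Matrix.isUnit_iff_isUnit_det _).trans
      (isUnit_det_twistedCirculant_iff (natCast_mem_maximalIdeal_wittVector p) a)
  exact ⟨hunit, fun ha => exists_twistedCirculant_inverse hπ hτ a (hunit.mpr ha)⟩
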